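/- arXiv:2202.01627 — 2 statements merged into one kernel-verified Lean document; each statement's English description precedes it below -/
import Mathlib

section
/- (Gaussian sign aggregation) Let d ∈ ℕ⁺, x ∈ ℝ^d with x ≠ 0, and u ∈ ℝ^d. If w is drawn from the multivariate Gaussian distribution N(u, I_d) with mean u and identity covariance, then E_w[ sign(w · x) ] = erf( (u · x) / (√2 · ‖x‖₂) ), where sign(t) = 1 for t > 0, sign(t) = −1 for t < 0, and sign(0) = 0. -/
/-!
Projecting `w ∼ N(u, I_d)` onto `x` gives a sum of independent Gaussians `wᵢ xᵢ`, so
`w · x ∼ N(u · x, ‖x‖²)`. For `Z ∼ N(μ, σ²)`, `E[sign Z] = P(Z > 0) - P(Z < 0)`, and by the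
symmetry of the centred Gaussian this is its signed mass on `[-μ, μ]`; rescaling by
`√2 σ` turns that into `erf (μ / (√2 σ))`.
-/

open MeasureTheory ProbabilityTheory
open scoped ENNReal

/-- The Gaussian error function `erf(t) = (2/√π) ∫₀ᵗ e^(−s²) ds`. -/
noncomputable def erf (t : ℝ) : ℝ :=
  2 / Real.sqrt Real.pi * ∫ s in (0 : ℝ)..t, Real.exp (-(s ^ 2))

open Real Set
open scoped NNReal

lemma erf_eq_integral_neg_self (t : ℝ) :
    erf t = (√π)⁻¹ * ∫ s in -t..t, rexp (-(s ^ 2)) := by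
  have hint (a b : ℝ) : IntervalIntegrable (fun s => rexp (-(s ^ 2))) volume a b :=
    (by fun_prop : Continuous fun s : ℝ => rexp (-(s ^ 2))).intervalIntegrable a b
  have heven : ∫ s in 0..t, rexp (-(s ^ 2)) = ∫ s in -t..0, rexp (-(s ^ 2)) := by
    have := intervalIntegral.integral_comp_neg (a := 0) (b := t) fun s => rexp (-(s ^ 2))
    simpa only [neg_sq, neg_zero] using this
  rw [erf, ← intervalIntegral.integral_add_adjacent_intervals (hint (-t) 0) (hint 0 t), ← heven]
  ring

namespace Real

lemma sign_eq_indicator_Ioi_sub_indicator_Iio (z : ℝ) :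
    Real.sign z = (Ioi 0).indicator 1 z - (Iio 0).indicator 1 z := by
  rcases lt_trichotomy z 0 with hz | rfl | hz
  · simp [sign_of_neg hz, hz, hz.not_gt]
  · simp
  · simp [sign_of_pos hz, hz, hz.not_gt]

lemma measurable_sign : Measurable Real.sign := by
  rw [funext sign_eq_indicator_Ioi_sub_indicator_Iio]
  exact (measurable_const.indicator measurableSet_Ioi).sub
    (measurable_const.indicator measurableSet_Iio)

end Real

lemma integral_sign_eq_measureReal_Ioi_sub_measureReal_Iio (ν : Measure ℝ) [IsFiniteMeasure ν] :
    ∫ z, Real.sign z ∂ν = ν.real (Ioi 0) - ν.real (Iio 0) := by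
  simp only [Real.sign_eq_indicator_Ioi_sub_indicator_Iio]
  rw [integral_sub ((integrable_const 1).indicator measurableSet_Ioi)
    ((integrable_const 1).indicator measurableSet_Iio),
    integral_indicator_one measurableSet_Ioi, integral_indicator_one measurableSet_Iio]

namespace ProbabilityTheory

lemma gaussianReal_real_apply (μ : ℝ) {v : ℝ≥0} (hv : v ≠ 0) (s : Set ℝ) :
    (gaussianReal μ v).real s = ∫ x in s, gaussianPDFReal μ v x := by
  rw [measureReal_def, gaussianReal_apply_eq_integral _ hv,
    ENNReal.toReal_ofReal (integral_nonneg (gaussianPDFReal_nonneg μ v))]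

lemma integral_gaussianPDFReal_zero_neg_self (a : ℝ) {v : ℝ≥0} (hv : v ≠ 0) :
    ∫ z in -a..a, gaussianPDFReal 0 v z = erf (a / (√2 * √v)) := by
  set c := √2 * √v with hc_def
  have hc : 0 < c := by have := pos_iff_ne_zero.2 hv; positivity
  have hpdf (s : ℝ) : gaussianPDFReal 0 v (c * s) = (√π)⁻¹ * c⁻¹ * rexp (-(s ^ 2)) := by
    have hsq : c ^ 2 = 2 * v := by
      rw [hc_def, mul_pow, sq_sqrt zero_le_two, sq_sqrt v.coe_nonneg]
    have hnorm : √(2 * π * v) = √π * c := by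
      rw [hc_def, sqrt_mul (by positivity), sqrt_mul zero_le_two]; ring
    rw [gaussianPDFReal, hnorm, mul_inv, sub_zero, mul_pow, hsq]
    congr 2
    field_simp
  have hsubst := intervalIntegral.integral_comp_mul_left (gaussianPDFReal 0 v) hc.ne'
    (a := -(a / c)) (b := a / c)
  rw [mul_neg, mul_div_cancel₀ a hc.ne', smul_eq_mul] at hsubst
  simp only [hpdf, intervalIntegral.integral_const_mul] at hsubst
  field_simp at hsubst
  rw [erf_eq_integral_neg_self, hsubst]
  field_simp

lemma integral_sign_gaussianReal_eq_measureReal_sub (μ : ℝ) (v : ℝ≥0) :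
    ∫ z, Real.sign z ∂(gaussianReal μ v)
      = (gaussianReal 0 v).real (Ioi (-μ)) - (gaussianReal 0 v).real (Ioi μ) := by
  have hshift : gaussianReal μ v = (gaussianReal 0 v).map (· + μ) := by
    rw [gaussianReal_map_add_const, zero_add]
  have hsymm : (gaussianReal 0 v).map (fun z => -z) = gaussianReal 0 v := by
    rw [gaussianReal_map_neg, neg_zero]
  have hIoi : (gaussianReal μ v).real (Ioi 0) = (gaussianReal 0 v).real (Ioi (-μ)) := by
    rw [hshift, map_measureReal_apply (by fun_prop) measurableSet_Ioi, preimage_add_const_Ioi,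
      zero_sub]
  have hIio : (gaussianReal μ v).real (Iio 0) = (gaussianReal 0 v).real (Ioi μ) := by
    rw [hshift, map_measureReal_apply (by fun_prop) measurableSet_Iio, preimage_add_const_Iio,
      zero_sub]
    nth_rw 1 [← hsymm]
    rw [map_measureReal_apply (by fun_prop) measurableSet_Iio]
    simp only [neg_preimage, neg_Iio, neg_neg]
  rw [integral_sign_eq_measureReal_Ioi_sub_measureReal_Iio, hIoi, hIio]

lemma integral_sign_gaussianReal (μ : ℝ) {v : ℝ≥0} (hv : v ≠ 0) :
    ∫ z, Real.sign z ∂(gaussianReal μ v) = erf (μ / (√2 * √v)) := by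
  have hint := integrable_gaussianPDFReal 0 v
  rw [integral_sign_gaussianReal_eq_measureReal_sub, gaussianReal_real_apply _ hv,
    gaussianReal_real_apply _ hv,
    intervalIntegral.integral_Ioi_sub_Ioi' hint.integrableOn hint.integrableOn,
    integral_gaussianPDFReal_zero_neg_self μ hv]

variable {Ω ι : Type*} {mΩ : MeasurableSpace Ω} {P : Measure Ω}

lemma iIndepFun.hasLaw_finsetSum_gaussianReal [IsProbabilityMeasure P] {X : ι → Ω → ℝ}
    {m : ι → ℝ} {v : ι → ℝ≥0} (hind : iIndepFun X P)
    (hX : ∀ i, HasLaw (X i) (gaussianReal (m i) (v i)) P) (s : Finset ι) :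
    HasLaw (∑ i ∈ s, X i) (gaussianReal (∑ i ∈ s, m i) (∑ i ∈ s, v i)) P := by
  classical
  induction s using Finset.induction_on with
  | empty => simpa using hasLaw_dirac_of_ae_eq (P := P) (X := 0) (x := (0 : ℝ)) (by rfl)
  | insert a s ha ih =>
    have hindep : IndepFun (∑ i ∈ s, X i) (X a) P :=
      hind.indepFun_finsetSum_of_notMem₀ (fun i => (hX i).aemeasurable) ha
    rw [Finset.sum_insert ha, Finset.sum_insert ha, Finset.sum_insert ha, add_comm (X a),
      add_comm (m a), add_comm (v a), ← gaussianReal_conv_gaussianReal]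
    exact hindep.hasLaw_add ih (hX a)

lemma hasLaw_sum_mul_pi_gaussianReal [Fintype ι] (m : ι → ℝ) (v : ι → ℝ≥0) (x : ι → ℝ) :
    HasLaw (fun w : ι → ℝ => ∑ i, w i * x i)
      (gaussianReal (∑ i, x i * m i) (∑ i, .mk (x i ^ 2) (sq_nonneg _) * v i))
      (Measure.pi fun i => gaussianReal (m i) (v i)) := by
  have hind : iIndepFun (fun i (w : ι → ℝ) => w i * x i)
      (Measure.pi fun i => gaussianReal (m i) (v i)) :=
    iIndepFun_pi (X := fun i (t : ℝ) => t * x i) fun i => by fun_prop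
  have hcoord (i : ι) : HasLaw (fun w : ι → ℝ => w i * x i)
      (gaussianReal (x i * m i) (.mk (x i ^ 2) (sq_nonneg _) * v i))
      (Measure.pi fun i => gaussianReal (m i) (v i)) :=
    gaussianReal_mul_const
      (measurePreserving_eval (fun j => gaussianReal (m j) (v j)) i).hasLaw (x i)
  simpa only [Finset.sum_fn] using hind.hasLaw_finsetSum_gaussianReal hcoord Finset.univ

end ProbabilityTheory

theorem gaussian_sign_aggregation_general (d : ℕ) (x u : Fin d → ℝ) (hx : x ≠ 0) :
    (∫ w, Real.sign (∑ i, w i * x i) ∂(Measure.pi fun i : Fin d => gaussianReal (u i) 1)) =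
      erf ((∑ i, u i * x i) / (Real.sqrt 2 * Real.sqrt (∑ i, (x i) ^ 2))) := by
  have hlaw := hasLaw_sum_mul_pi_gaussianReal u (fun _ => 1) x
  have hvar : ((∑ i, .mk (x i ^ 2) (sq_nonneg _) * 1 : ℝ≥0) : ℝ) = ∑ i, x i ^ 2 := by simp
  have hv : ∑ i, x i ^ 2 ≠ 0 := by
    simpa [Fintype.sum_eq_zero_iff_of_nonneg, sq_nonneg, Pi.le_def, funext_iff] using hx
  refine (hlaw.integral_comp Real.measurable_sign.aestronglyMeasurable).trans ?_
  rw [integral_sign_gaussianReal _ (by rwa [← NNReal.coe_ne_zero, hvar]), hvar]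
  simp only [mul_comm (x _)]

/-- Gaussian sign aggregation: if `w ∼ N(u, I_d)` then
`E_w[sign(w · x)] = erf((u · x)/(√2 ‖x‖₂))`. -/
theorem gaussian_sign_aggregation (d : ℕ) (hd : 0 < d) (x u : Fin d → ℝ) (hx : x ≠ 0) :
    (∫ w, Real.sign (∑ i, w i * x i) ∂(Measure.pi fun i : Fin d => gaussianReal (u i) 1)) =
      erf ((∑ i, u i * x i) / (Real.sqrt 2 * Real.sqrt (∑ i, (x i) ^ 2))) :=
  gaussian_sign_aggregation_general d x u hx
end

section
/- (Explicit KL bound for the binary SHEL mixture) Let d, K ∈ ℕ⁺, β > 0, u_1,…,u_K, u⁰_1,…,u⁰_K ∈ ℝ^d, v ∈ ℝ^K with v ≠ 0, and v⁰ ∈ ℝ^K with v⁰_k ≠ 0 for all k. Let Q be the mixture on ℝ^d whose component k ∈ {1,…,K} is N(u_k, (1/(2β²))I_d) with weight max(0,v_k)/‖v‖₁ and whose component K+k is N(−u_k, (1/(2β²))I_d) with weight max(0,−v_k)/‖v‖₁; let P be the mixture whose component k is N(u⁰_k, (1/(2β²))I_d) with weight |v⁰_k|/(2‖v⁰‖₁)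 and whose component K+k is N(−u⁰_k, (1/(2β²))I_d) with weight |v⁰_k|/(2‖v⁰‖₁). Then KL(Q, P) ≤ Σ_{k=1}^K (|v_k|/‖v‖₁) · ( β² ‖u_k − u⁰_k‖₂² + log( 2 (|v_k|/‖v‖₁) / (|v⁰_k|/‖v⁰‖₁) ) ). -/
open MeasureTheory ProbabilityTheory
open scoped ENNReal NNReal Classical

/-- Kullback-Leibler divergence between two measures, `+∞` if `Q` is not absolutely
continuous with respect to `P` (or if the log-likelihood ratio is not integrable). -/
noncomputable def KLdiv {Ω : Type*} [MeasurableSpace Ω] (Q P : Measure Ω) : ℝ≥0∞ :=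
  if Q ≪ P ∧ Integrable (llr Q P) Q then ENNReal.ofReal (∫ ω, llr Q P ω ∂Q) else ⊤

/-- The multivariate Gaussian `N(μ, σ²I_d)` on `ℝ^d`, as a product of independent
one-dimensional Gaussians with means `μ i` and common variance `σ²`. -/
noncomputable def gaussPi {d : ℕ} (μ : Fin d → ℝ) (v : ℝ≥0) : Measure (Fin d → ℝ) :=
  Measure.pi fun i => gaussianReal (μ i) v

/-!
Both mixtures have everywhere positive Lebesgue densities `f = ∑ aₖ φₖ` and `g = ∑ bₖ ψₖ`, so
`KL(Q, P) = ∫ f (log f - log g)`. The log-sum inequality bounds this integrand pointwise by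
`∑ aₖ φₖ (log (aₖ φₖ) - log (bₖ ψₖ))`, and since `log φₖ - log ψₖ` is affine in `x`, the bound
integrates to `∑ aₖ (log (aₖ / bₖ) + ‖mₖ - m'ₖ‖² / (2σ²))`. For each `k` only one of the two
components `±uₖ` of `Q` has positive weight; it is compared with the component `±u⁰ₖ` of `P`, of
weight `|v⁰ₖ| / (2‖v⁰‖₁)`, which produces the factor `2` inside the logarithm.
-/

open Real

theorem mul_log_sub_log_le_sub {p q : ℝ} (hp : 0 ≤ p) (hq : 0 < q) :
    p * (log q - log p) ≤ q - p := by
  rcases hp.eq_or_lt with rfl | hp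
  · simpa using hq.le
  · have h := log_le_sub_one_of_pos (div_pos hq hp)
    rw [log_div hq.ne' hp.ne'] at h
    calc p * (log q - log p) ≤ p * (q / p - 1) := mul_le_mul_of_nonneg_left h hp.le
      _ = q - p := by field_simp

theorem mul_log_sum_sub_log_sum_le {ι : Type*} [Fintype ι] {p q : ι → ℝ}
    (hp : ∀ k, 0 ≤ p k) (hq : ∀ k, 0 < q k) :
    (∑ k, p k) * (log (∑ k, p k) - log (∑ k, q k)) ≤ ∑ k, p k * (log (p k) - log (q k)) := by
  set P := ∑ k, p k
  set Q := ∑ k, q k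
  rcases (Finset.sum_nonneg fun k _ => hp k : 0 ≤ P).eq_or_lt with hP | hP
  · have hp0 : ∀ k, p k = 0 := fun k =>
      (Finset.sum_eq_zero_iff_of_nonneg fun k _ => hp k).1 hP.symm k (Finset.mem_univ k)
    simp [show P = 0 from hP.symm, hp0]
  have hQ : 0 < Q := Finset.sum_pos (fun k _ => hq k) (Finset.nonempty_of_sum_ne_zero hP.ne')
  -- Gibbs' inequality for `p` against the rescaled weights `q k * P / Q`, which also sum to `P`.
  have hterm : ∀ k, p k * (log P - log Q) - p k * (log (p k) - log (q k)) ≤ q k * P / Q - p k := by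
    intro k
    have hqPQ := mul_pos (hq k) hP
    have h := mul_log_sub_log_le_sub (hp k) (div_pos hqPQ hQ)
    rw [log_div hqPQ.ne' hQ.ne', log_mul (hq k).ne' hP.ne'] at h
    linarith
  have hsum := Finset.sum_le_sum fun k (_ : k ∈ Finset.univ) => hterm k
  rw [Finset.sum_sub_distrib, Finset.sum_sub_distrib, ← Finset.sum_mul, ← Finset.sum_div,
    ← Finset.sum_mul, mul_div_cancel_left₀ _ hQ.ne', sub_self] at hsum
  linarith

section Densities

variable {α : Type*} [MeasurableSpace α] {μ : Measure α} {f g : α → ℝ}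

theorem absolutelyContinuous_withDensity_ofReal (hg : Measurable g) (hg_pos : ∀ x, 0 < g x) :
    μ ≪ μ.withDensity fun x => ENNReal.ofReal (g x) :=
  withDensity_absolutelyContinuous' hg.ennreal_ofReal.aemeasurable
    (ae_of_all _ fun x => (ENNReal.ofReal_pos.2 (hg_pos x)).ne')

theorem llr_withDensity_ofReal [SigmaFinite μ] (hf : Measurable f) (hg : Measurable g)
    (hf_pos : ∀ x, 0 < f x) (hg_pos : ∀ x, 0 < g x) :
    llr (μ.withDensity fun x => ENNReal.ofReal (f x)) (μ.withDensity fun x => ENNReal.ofReal (g x))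
      =ᵐ[μ] fun x => log (f x) - log (g x) := by
  have hratio : Measurable fun x => ENNReal.ofReal (f x) / ENNReal.ofReal (g x) :=
    hf.ennreal_ofReal.div hg.ennreal_ofReal
  have hQ : μ.withDensity (fun x => ENNReal.ofReal (f x)) = (μ.withDensity fun x =>
      ENNReal.ofReal (g x)).withDensity fun x => ENNReal.ofReal (f x) / ENNReal.ofReal (g x) := by
    rw [← withDensity_mul _ hg.ennreal_ofReal hratio]
    congr with x
    exact (ENNReal.mul_div_cancel (ENNReal.ofReal_pos.2 (hg_pos x)).ne' ENNReal.ofReal_ne_top).symm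
  have hrn := Measure.rnDeriv_withDensity (μ.withDensity fun x => ENNReal.ofReal (g x)) hratio
  rw [← hQ] at hrn
  filter_upwards [(absolutelyContinuous_withDensity_ofReal hg hg_pos).ae_le hrn] with x hx
  rw [llr_def]
  dsimp only
  rw [hx, ENNReal.toReal_div, ENNReal.toReal_ofReal (hf_pos x).le,
    ENNReal.toReal_ofReal (hg_pos x).le, log_div (hf_pos x).ne' (hg_pos x).ne']

theorem KLdiv_withDensity_ofReal_le [SigmaFinite μ] {R : α → ℝ} (hf : Measurable f)
    (hg : Measurable g) (hf_pos : ∀ x, 0 < f x) (hg_pos : ∀ x, 0 < g x)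
    (hf_int : Integrable f μ) (hg_int : Integrable g μ) (hR_int : Integrable R μ)
    (hfR : ∀ x, f x * (log (f x) - log (g x)) ≤ R x) :
    KLdiv (μ.withDensity fun x => ENNReal.ofReal (f x))
        (μ.withDensity fun x => ENNReal.ofReal (g x)) ≤ ENNReal.ofReal (∫ x, R x ∂μ) := by
  have hQμ := withDensity_absolutelyContinuous μ fun x => ENNReal.ofReal (f x)
  have hQP := hQμ.trans (absolutelyContinuous_withDensity_ofReal hg hg_pos)
  have hllr := hQμ.ae_eq (llr_withDensity_ofReal hf hg hf_pos hg_pos)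
  have hsmul : (fun x => (ENNReal.ofReal (f x)).toReal • (log (f x) - log (g x)))
      = fun x => f x * (log (f x) - log (g x)) := by
    ext x
    rw [smul_eq_mul, ENNReal.toReal_ofReal (hf_pos x).le]
  -- The integrand lies between `f - g` (Gibbs) and `R`.
  have hint : Integrable (fun x => f x * (log (f x) - log (g x))) μ := by
    refine integrable_of_le_of_le (by fun_prop) (ae_of_all _ fun x => ?_) (ae_of_all _ hfR)
      (hf_int.sub hg_int) hR_int
    show f x - g x ≤ f x * (log (f x) - log (g x))
    linarith [mul_log_sub_log_le_sub (hf_pos x).le (hg_pos x),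
      mul_sub (f x) (log (g x)) (log (f x)), mul_sub (f x) (log (f x)) (log (g x))]
  have hllr_int : Integrable (fun x => log (f x) - log (g x))
      (μ.withDensity fun x => ENNReal.ofReal (f x)) := by
    rw [integrable_withDensity_iff_integrable_smul' hf.ennreal_ofReal
      (ae_of_all _ fun _ => ENNReal.ofReal_lt_top), hsmul]
    exact hint
  rw [KLdiv, if_pos ⟨hQP, hllr_int.congr hllr.symm⟩, integral_congr_ae hllr,
    integral_withDensity_eq_integral_toReal_smul hf.ennreal_ofReal
      (ae_of_all _ fun _ => ENNReal.ofReal_lt_top), hsmul]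
  exact ENNReal.ofReal_le_ofReal (integral_mono hint hR_int hfR)

end Densities

theorem integrable_id_gaussianReal (μ : ℝ) (v : ℝ≥0) :
    Integrable (fun t => t) (gaussianReal μ v) :=
  (memLp_id_gaussianReal 1).integrable le_rfl

theorem integrable_sq_sub_sq_gaussianReal (μ a : ℝ) (v : ℝ≥0) :
    Integrable (fun t => (t - a) ^ 2 - (t - μ) ^ 2) (gaussianReal μ v) := by
  refine (((integrable_id_gaussianReal μ v).const_mul (2 * (μ - a))).add
    (integrable_const (a ^ 2 - μ ^ 2))).congr (ae_of_all _ fun t => ?_)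
  simp only [Pi.add_apply]
  ring

theorem integral_sq_sub_sq_gaussianReal (μ a : ℝ) (v : ℝ≥0) :
    ∫ t, ((t - a) ^ 2 - (t - μ) ^ 2) ∂gaussianReal μ v = (μ - a) ^ 2 := by
  calc ∫ t, ((t - a) ^ 2 - (t - μ) ^ 2) ∂gaussianReal μ v
      = ∫ t, (2 * (μ - a) * t + (a ^ 2 - μ ^ 2)) ∂gaussianReal μ v :=
        integral_congr_ae (ae_of_all _ fun t => by ring)
    _ = (μ - a) ^ 2 := by
        rw [integral_add ((integrable_id_gaussianReal μ v).const_mul _) (integrable_const _),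
          integral_const_mul, integral_id_gaussianReal, integral_const, probReal_univ, one_smul]
        ring

section Gaussian

variable {d : ℕ} {v : ℝ≥0}

theorem integrable_comp_eval_gaussPi {h : ℝ → ℝ} (μ : Fin d → ℝ) (i : Fin d)
    (hh : Integrable h (gaussianReal (μ i) v)) :
    Integrable (fun x => h (x i)) (gaussPi μ v) :=
  ((measurePreserving_eval _ i).integrable_comp hh.aestronglyMeasurable).2 hh

theorem integral_comp_eval_gaussPi {h : ℝ → ℝ} (μ : Fin d → ℝ) (i : Fin d)
    (hh : AEStronglyMeasurable h (gaussianReal (μ i) v)) :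
    ∫ x, h (x i) ∂gaussPi μ v = ∫ t, h t ∂gaussianReal (μ i) v := by
  have hmp := measurePreserving_eval (fun j => gaussianReal (μ j) v) i
  rw [← hmp.map_eq] at hh
  exact (integral_map hmp.measurable.aemeasurable hh).symm.trans (by rw [hmp.map_eq])

noncomputable def gaussPiPDFReal (μ : Fin d → ℝ) (v : ℝ≥0) (x : Fin d → ℝ) : ℝ :=
  ∏ i, gaussianPDFReal (μ i) v (x i)

theorem gaussPiPDFReal_nonneg (μ x : Fin d → ℝ) : 0 ≤ gaussPiPDFReal μ v x :=
  Finset.prod_nonneg fun _ _ => gaussianPDFReal_nonneg _ _ _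

theorem gaussPiPDFReal_pos (hv : v ≠ 0) (μ x : Fin d → ℝ) : 0 < gaussPiPDFReal μ v x :=
  Finset.prod_pos fun _ _ => gaussianPDFReal_pos _ _ _ hv

@[fun_prop]
theorem measurable_gaussPiPDFReal (μ : Fin d → ℝ) : Measurable (gaussPiPDFReal μ v) :=
  Finset.measurable_prod _ fun i _ => (measurable_gaussianPDFReal _ _).comp (measurable_pi_apply i)

theorem integrable_gaussPiPDFReal (μ : Fin d → ℝ) : Integrable (gaussPiPDFReal μ v) := by
  rw [volume_pi]
  exact Integrable.fintype_prod fun i => integrable_gaussianPDFReal (μ i) v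

theorem gaussPi_eq_withDensity (hv : v ≠ 0) (μ : Fin d → ℝ) :
    gaussPi μ v = volume.withDensity fun x => ENNReal.ofReal (gaussPiPDFReal μ v x) := by
  refine Measure.pi_eq fun s hs => ?_
  have hint : Integrable (gaussPiPDFReal μ v) (Measure.pi fun i => volume.restrict (s i)) :=
    Integrable.fintype_prod fun i => (integrable_gaussianPDFReal (μ i) v).restrict
  rw [withDensity_apply _ (.univ_pi hs), volume_pi, Measure.restrict_pi_pi,
    ← ofReal_integral_eq_lintegral_ofReal hint (ae_of_all _ (gaussPiPDFReal_nonneg μ))]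
  simp only [gaussPiPDFReal]
  rw [integral_fintype_prod_eq_prod, ENNReal.ofReal_prod_of_nonneg fun i _ =>
      setIntegral_nonneg_of_ae (ae_of_all _ (gaussianPDFReal_nonneg _ _))]
  exact Finset.prod_congr rfl fun i _ => (gaussianReal_apply_eq_integral _ hv _).symm

theorem log_gaussianPDFReal (hv : v ≠ 0) (μ t : ℝ) :
    log (gaussianPDFReal μ v t) = log (√(2 * π * v))⁻¹ - (t - μ) ^ 2 / (2 * v) := by
  have hc : 0 < 2 * π * v := mul_pos (by positivity) (NNReal.coe_pos.2 (pos_iff_ne_zero.2 hv))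
  rw [gaussianPDFReal, log_mul (inv_pos.2 (sqrt_pos.2 hc)).ne' (exp_pos _).ne', log_exp]
  ring

theorem log_gaussPiPDFReal_sub_log (hv : v ≠ 0) (μ μ' x : Fin d → ℝ) :
    log (gaussPiPDFReal μ v x) - log (gaussPiPDFReal μ' v x)
      = ∑ i, ((x i - μ' i) ^ 2 - (x i - μ i) ^ 2) / (2 * v) := by
  simp only [gaussPiPDFReal]
  rw [log_prod fun i _ => (gaussianPDFReal_pos _ _ _ hv).ne',
    log_prod fun i _ => (gaussianPDFReal_pos _ _ _ hv).ne', ← Finset.sum_sub_distrib]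
  refine Finset.sum_congr rfl fun i _ => ?_
  rw [log_gaussianPDFReal hv, log_gaussianPDFReal hv]
  ring

theorem integrable_log_gaussPiPDFReal_sub_log (hv : v ≠ 0) (μ μ' : Fin d → ℝ) :
    Integrable (fun x => log (gaussPiPDFReal μ v x) - log (gaussPiPDFReal μ' v x))
      (gaussPi μ v) := by
  simp_rw [log_gaussPiPDFReal_sub_log hv]
  exact integrable_finsetSum _ fun i _ =>
    (integrable_comp_eval_gaussPi μ i (integrable_sq_sub_sq_gaussianReal _ _ _)).div_const _

theorem integral_log_gaussPiPDFReal_sub_log (hv : v ≠ 0) (μ μ' : Fin d → ℝ) :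
    ∫ x, (log (gaussPiPDFReal μ v x) - log (gaussPiPDFReal μ' v x)) ∂gaussPi μ v
      = (∑ i, (μ i - μ' i) ^ 2) / (2 * v) := by
  simp_rw [log_gaussPiPDFReal_sub_log hv]
  rw [integral_finsetSum _ fun i _ =>
    (integrable_comp_eval_gaussPi μ i (integrable_sq_sub_sq_gaussianReal _ _ _)).div_const _,
    Finset.sum_div]
  refine Finset.sum_congr rfl fun i _ => ?_
  rw [integral_div, integral_comp_eval_gaussPi (h := fun t => (t - μ' i) ^ 2 - (t - μ i) ^ 2)
    μ i (by fun_prop), integral_sq_sub_sq_gaussianReal]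

theorem integral_gaussPiPDFReal (hv : v ≠ 0) (μ : Fin d → ℝ) :
    ∫ x, gaussPiPDFReal μ v x = 1 := by
  simp only [gaussPiPDFReal]
  rw [volume_pi, integral_fintype_prod_eq_prod]
  exact Finset.prod_eq_one fun i _ => integral_gaussianPDFReal_eq_one _ hv

theorem integrable_gaussPiPDFReal_mul_iff (hv : v ≠ 0) (μ : Fin d → ℝ) {h : (Fin d → ℝ) → ℝ} :
    Integrable (fun x => gaussPiPDFReal μ v x * h x) ↔ Integrable h (gaussPi μ v) := by
  rw [gaussPi_eq_withDensity hv, integrable_withDensity_iff_integrable_smul'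
    (measurable_gaussPiPDFReal μ).ennreal_ofReal (ae_of_all _ fun _ => ENNReal.ofReal_lt_top)]
  simp_rw [ENNReal.toReal_ofReal (gaussPiPDFReal_nonneg μ _), smul_eq_mul]

theorem integral_gaussPiPDFReal_mul (hv : v ≠ 0) (μ : Fin d → ℝ) (h : (Fin d → ℝ) → ℝ) :
    ∫ x, gaussPiPDFReal μ v x * h x = ∫ x, h x ∂gaussPi μ v := by
  rw [gaussPi_eq_withDensity hv, integral_withDensity_eq_integral_toReal_smul
    (measurable_gaussPiPDFReal μ).ennreal_ofReal (ae_of_all _ fun _ => ENNReal.ofReal_lt_top)]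
  simp_rw [ENNReal.toReal_ofReal (gaussPiPDFReal_nonneg μ _), smul_eq_mul]

theorem sum_smul_gaussPi_eq_withDensity {ι : Type*} [Fintype ι] (hv : v ≠ 0) {a : ι → ℝ}
    (ha : ∀ k, 0 ≤ a k) (m : ι → Fin d → ℝ) :
    ∑ k, ENNReal.ofReal (a k) • gaussPi (m k) v
      = volume.withDensity fun x => ENNReal.ofReal (∑ k, a k * gaussPiPDFReal (m k) v x) := by
  have hsum : (fun x => ENNReal.ofReal (∑ k, a k * gaussPiPDFReal (m k) v x))
      = ∑' k, ENNReal.ofReal (a k) • fun x => ENNReal.ofReal (gaussPiPDFReal (m k) v x) := by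
    ext x
    rw [tsum_fintype, Finset.sum_apply, ENNReal.ofReal_sum_of_nonneg fun k _ =>
      mul_nonneg (ha k) (gaussPiPDFReal_nonneg _ _)]
    simp_rw [Pi.smul_apply, smul_eq_mul, ENNReal.ofReal_mul (ha _)]
  have hmeas := fun k => (measurable_gaussPiPDFReal (v := v) (m k)).ennreal_ofReal
  rw [hsum, withDensity_tsum fun k => hmeas k |>.const_smul _, Measure.sum_fintype]
  simp_rw [withDensity_smul _ (hmeas _), gaussPi_eq_withDensity hv]

theorem KLdiv_sum_smul_gaussPi_le {ι : Type*} [Fintype ι] (hv : v ≠ 0)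
    {a b : ι → ℝ} (ha : ∀ k, 0 ≤ a k) (ha_pos : ∃ k, 0 < a k) (hb : ∀ k, 0 < b k)
    (m m' : ι → Fin d → ℝ) :
    KLdiv (∑ k, ENNReal.ofReal (a k) • gaussPi (m k) v)
        (∑ k, ENNReal.ofReal (b k) • gaussPi (m' k) v)
      ≤ ENNReal.ofReal
          (∑ k, a k * (log (a k) - log (b k) + (∑ i, (m k i - m' k i) ^ 2) / (2 * v))) := by
  obtain ⟨k₀, hk₀⟩ := ha_pos
  have hφ_pos := gaussPiPDFReal_pos (d := d) hv
  have hφ_nonneg := gaussPiPDFReal_nonneg (d := d) (v := v)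
  have hf_pos (x) : 0 < ∑ k, a k * gaussPiPDFReal (m k) v x :=
    (mul_pos hk₀ (hφ_pos _ x)).trans_le <| Finset.single_le_sum
      (fun k _ => mul_nonneg (ha k) (hφ_nonneg _ x)) (Finset.mem_univ k₀)
  have hg_pos (x) : 0 < ∑ k, b k * gaussPiPDFReal (m' k) v x :=
    Finset.sum_pos (fun k _ => mul_pos (hb k) (hφ_pos _ x)) ⟨k₀, Finset.mem_univ _⟩
  have hR_int (k) : Integrable fun x => a k * (gaussPiPDFReal (m k) v x * (log (a k) - log (b k))
      + gaussPiPDFReal (m k) v x *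
        (log (gaussPiPDFReal (m k) v x) - log (gaussPiPDFReal (m' k) v x))) :=
    (((integrable_gaussPiPDFReal _).mul_const _).add ((integrable_gaussPiPDFReal_mul_iff hv _).2
      (integrable_log_gaussPiPDFReal_sub_log hv _ _))).const_mul _
  rw [sum_smul_gaussPi_eq_withDensity hv ha, sum_smul_gaussPi_eq_withDensity hv fun k => (hb k).le]
  refine (KLdiv_withDensity_ofReal_le (by fun_prop) (by fun_prop) hf_pos hg_pos
    (integrable_finsetSum _ fun k _ => (integrable_gaussPiPDFReal _).const_mul _)
    (integrable_finsetSum _ fun k _ => (integrable_gaussPiPDFReal _).const_mul _)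
    (integrable_finsetSum Finset.univ fun k _ => hR_int k) fun x => ?_).trans_eq ?_
  · refine (mul_log_sum_sub_log_sum_le
      (fun k => mul_nonneg (ha k) (hφ_nonneg _ x)) (fun k => mul_pos (hb k) (hφ_pos _ x))).trans_eq
      (Finset.sum_congr rfl fun k _ => ?_)
    rcases (ha k).eq_or_lt with h | h
    · simp [← h]
    · rw [log_mul h.ne' (hφ_pos _ x).ne', log_mul (hb k).ne' (hφ_pos _ x).ne']
      ring
  · rw [integral_finsetSum _ fun k _ => hR_int k]
    refine congrArg _ (Finset.sum_congr rfl fun k _ => ?_)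
    rw [integral_const_mul, integral_add ((integrable_gaussPiPDFReal _).mul_const _)
      ((integrable_gaussPiPDFReal_mul_iff hv _).2 (integrable_log_gaussPiPDFReal_sub_log hv _ _)),
      integral_mul_const, integral_gaussPiPDFReal hv, integral_gaussPiPDFReal_mul hv,
      integral_log_gaussPiPDFReal_sub_log hv, one_mul]

end Gaussian

theorem apply_max_zero_add_apply_max_neg_zero {F : ℝ → ℝ} (hF : F 0 = 0) (t : ℝ) :
    F (max 0 t) + F (max 0 (-t)) = F |t| := by
  rcases le_total 0 t with h | h
  · simp [h, hF, abs_of_nonneg]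
  · simp [h, hF, abs_of_nonpos]

theorem mul_log_sub_log_half_add (x y D : ℝ) (hy : y ≠ 0) :
    x * (log x - log (y / 2) + D) = x * (D + log (2 * x / y)) := by
  rcases eq_or_ne x 0 with rfl | hx
  · simp
  · rw [show 2 * x / y = x / (y / 2) by ring, log_div hx (by positivity)]
    ring

theorem kl_bound_binary_shel_mixture_general
    (d K : ℕ) (β : ℝ) (hβ : 0 < β)
    (u u0 : Fin K → Fin d → ℝ)
    (v : Fin K → ℝ) (hv : v ≠ 0)
    (v0 : Fin K → ℝ) (hv0 : ∀ k, v0 k ≠ 0) :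
    KLdiv
      ((∑ k : Fin K, ENNReal.ofReal (max 0 (v k) / ∑ j, |v j|) •
            gaussPi (u k) (Real.toNNReal (1 / (2 * β ^ 2)))) +
        ∑ k : Fin K, ENNReal.ofReal (max 0 (-v k) / ∑ j, |v j|) •
            gaussPi (fun i => -(u k i)) (Real.toNNReal (1 / (2 * β ^ 2))))
      ((∑ k : Fin K, ENNReal.ofReal (|v0 k| / (2 * ∑ j, |v0 j|)) •
            gaussPi (u0 k) (Real.toNNReal (1 / (2 * β ^ 2)))) +
        ∑ k : Fin K, ENNReal.ofReal (|v0 k| / (2 * ∑ j, |v0 j|)) •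
            gaussPi (fun i => -(u0 k i)) (Real.toNNReal (1 / (2 * β ^ 2)))) ≤
      ENNReal.ofReal
        (∑ k, (|v k| / ∑ j, |v j|) *
          (β ^ 2 * (∑ i, (u k i - u0 k i) ^ 2) +
            Real.log (2 * (|v k| / ∑ j, |v j|) / (|v0 k| / ∑ j, |v0 j|)))) := by
  set S := ∑ j, |v j|
  set S0 := ∑ j, |v0 j|
  obtain ⟨k₀, hk₀⟩ := Function.ne_iff.mp hv
  have hS : 0 < S :=
    Finset.sum_pos' (fun j _ => abs_nonneg _) ⟨k₀, Finset.mem_univ _, abs_pos.2 hk₀⟩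
  have hS0 : 0 < S0 := Finset.sum_pos (fun j _ => abs_pos.2 (hv0 j)) ⟨k₀, Finset.mem_univ _⟩
  have hσ : (1 / (2 * β ^ 2)).toNNReal ≠ 0 := by positivity
  have hσ' : 2 * ((1 / (2 * β ^ 2)).toNNReal : ℝ) = (β ^ 2)⁻¹ := by
    rw [Real.coe_toNNReal _ (by positivity)]
    field_simp
  have ha_pos : ∃ κ, 0 < Sum.elim (fun k => max 0 (v k) / S) (fun k => max 0 (-v k) / S) κ := by
    rcases hk₀.lt_or_gt with h | h
    · exact ⟨.inr k₀, div_pos (lt_max_of_lt_right (neg_pos.2 h)) hS⟩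
    · exact ⟨.inl k₀, div_pos (lt_max_of_lt_right h) hS⟩
  have key := KLdiv_sum_smul_gaussPi_le hσ
    (by rintro (k | k) <;> exact div_nonneg (le_max_left _ _) hS.le) ha_pos
    (b := Sum.elim (fun k => |v0 k| / (2 * S0)) fun k => |v0 k| / (2 * S0))
    (by rintro (k | k) <;> exact div_pos (abs_pos.2 (hv0 k)) (by positivity))
    (Sum.elim u fun k i => -u k i) (Sum.elim u0 fun k i => -u0 k i)
  simp only [Fintype.sum_sum_type, Sum.elim_inl, Sum.elim_inr] at key
  refine key.trans (ENNReal.ofReal_le_ofReal ?_)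
  rw [← Finset.sum_add_distrib]
  refine (Finset.sum_congr rfl fun k _ => ?_).le
  have hD : ∑ i, (-u k i - -u0 k i) ^ 2 = ∑ i, (u k i - u0 k i) ^ 2 :=
    Finset.sum_congr rfl fun i _ => by ring
  rw [hD, apply_max_zero_add_apply_max_neg_zero (F := fun y => y / S * (log (y / S) -
      log (|v0 k| / (2 * S0)) + (∑ i, (u k i - u0 k i) ^ 2) / (2 * _))) (by simp),
    hσ', div_inv_eq_mul, div_mul_eq_div_div_swap,
    mul_log_sub_log_half_add _ _ _ (div_pos (abs_pos.2 (hv0 k)) hS0).ne']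
  ring

/-- Explicit KL bound for the binary SHEL mixture:
`KL(Q, P) ≤ Σ_k (|v_k|/‖v‖₁)(β²‖u_k − u⁰_k‖₂² + log(2(|v_k|/‖v‖₁)/(|v⁰_k|/‖v⁰‖₁)))`. -/
theorem kl_bound_binary_shel_mixture
    (d K : ℕ) (hd : 0 < d) (hK : 0 < K) (β : ℝ) (hβ : 0 < β)
    (u u0 : Fin K → Fin d → ℝ)
    (v : Fin K → ℝ) (hv : v ≠ 0)
    (v0 : Fin K → ℝ) (hv0 : ∀ k, v0 k ≠ 0) :
    KLdiv
      ((∑ k : Fin K, ENNReal.ofReal (max 0 (v k) / ∑ j, |v j|) •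
            gaussPi (u k) (Real.toNNReal (1 / (2 * β ^ 2)))) +
        ∑ k : Fin K, ENNReal.ofReal (max 0 (-v k) / ∑ j, |v j|) •
            gaussPi (fun i => -(u k i)) (Real.toNNReal (1 / (2 * β ^ 2))))
      ((∑ k : Fin K, ENNReal.ofReal (|v0 k| / (2 * ∑ j, |v0 j|)) •
            gaussPi (u0 k) (Real.toNNReal (1 / (2 * β ^ 2)))) +
        ∑ k : Fin K, ENNReal.ofReal (|v0 k| / (2 * ∑ j, |v0 j|)) •
            gaussPi (fun i => -(u0 k i)) (Real.toNNReal (1 / (2 * β ^ 2)))) ≤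
      ENNReal.ofReal
        (∑ k, (|v k| / ∑ j, |v j|) *
          (β ^ 2 * (∑ i, (u k i - u0 k i) ^ 2) +
            Real.log (2 * (|v k| / ∑ j, |v j|) / (|v0 k| / ∑ j, |v0 j|)))) :=
  kl_bound_binary_shel_mixture_general d K β hβ u u0 v hv v0 hv0
end
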